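/- arXiv:1006.5397 — 2 statements merged into one kernel-verified Lean document; each statement's English description precedes it below -/
import Mathlib

section
/- The Razak building block A(n,n') is stably projectionless: for every positive integer k, every element p of M_k(A(n,n')) satisfying p = p* and p·p = p is zero. -/
open scoped Matrix.Norms.L2Operator ComplexOrder
open Filter MeasureTheory

noncomputable section

/-- The unit interval `[0,1]`. -/
abbrev I01 : Type := unitInterval

/-- Square complex matrices of size `N`. -/
abbrev Mat (N : ℕ) : Type := Matrix (Fin N) (Fin N) ℂ

/-- Block-diagonal matrix with `m` diagonal blocks of size `k` (block `0` in the upper left),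
realized as an `N × N` matrix, where `h : k * m = N`. -/
def cdiag {k m N : ℕ} (h : k * m = N) (blocks : Fin m → Mat k) : Mat N :=
  Matrix.reindex (finProdFinEquiv.trans (finCongr h)) (finProdFinEquiv.trans (finCongr h))
    (Matrix.blockDiagonal blocks)

/-- The Razak building block `A(n, n')` with `n' = n * (a + 1)`, realized as a subset of
`C([0,1], M_N(ℂ))` where `h : n * (a + 1) = N`: those continuous matrix-valued functions `f`
for which there is `c ∈ M_n(ℂ)` with `f 0 = diag(c, …, c, 0_n)` (`a` copies of `c`) and
`f 1 = diag(c, …, c)` (`a + 1` copies of `c`). -/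
def razakA (n a : ℕ) {N : ℕ} (h : n * (a + 1) = N) : Set C(I01, Mat N) :=
  {f | ∃ c : Mat n,
    f 0 = cdiag h (fun i : Fin (a + 1) => if (i : ℕ) < a then c else 0) ∧
    f 1 = cdiag h (fun _ : Fin (a + 1) => c)}

/-- The normalized trace of a square complex matrix. -/
def ntr {N : ℕ} (M : Mat N) : ℂ := M.trace / N

/-! Evaluating at `t` and flattening turns an idempotent `p ∈ M_k(A(n,n'))` into an idempotent
matrix `P t`, whose trace is its rank. The trace depends continuously on `t` and the rank is a
natural number, so both are constant on `[0,1]`, say `r`. Summing the boundary conditions over the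
diagonal entries of `p` gives `trace (P 0) = a s` and `trace (P 1) = (a + 1) s`, where `s` is the
sum of the traces of the matrices `c` attached to these entries. Hence `r = 0`, and an idempotent
of rank zero vanishes. -/

theorem Matrix.trace_comp {I J R : Type*} [Fintype I] [Fintype J] [AddCommMonoid R]
    (M : Matrix I I (Matrix J J R)) :
    (Matrix.comp I I J J R M).trace = ∑ i, (M i i).trace := by
  simp only [Matrix.trace, Matrix.diag, Matrix.comp_apply, Fintype.sum_prod_type]

theorem Matrix.trace_reindex {m n R : Type*} [Fintype m] [Fintype n] [AddCommMonoid R]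
    (e : m ≃ n) (M : Matrix m m R) : (Matrix.reindex e e M).trace = M.trace :=
  Fintype.sum_equiv e.symm _ _ fun _ => rfl

theorem IsIdempotentElem.matrix_trace_eq_rank {K m : Type*} [Field K] [Fintype m] [DecidableEq m]
    {Q : Matrix m m K} (hQ : IsIdempotentElem Q) : Q.trace = Q.rank := by
  have hQ' : IsIdempotentElem (Matrix.toLin' Q) := hQ.map Matrix.toLinAlgEquiv'
  rw [← Matrix.trace_toLin'_eq, (LinearMap.IsIdempotentElem.isProj_range _ hQ').trace]
  rfl

theorem Matrix.eq_zero_of_rank_eq_zero {K m n : Type*} [Field K] [Fintype n]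
    {A : Matrix m n K} (hA : A.rank = 0) : A = 0 := by
  classical
  rw [Matrix.rank, Submodule.finrank_eq_zero, LinearMap.range_eq_bot] at hA
  exact Matrix.toLin'.injective (hA.trans (map_zero _).symm)

theorem PreconnectedSpace.constant_of_continuous_natCast {X : Type*} [TopologicalSpace X]
    [PreconnectedSpace X] {g : X → ℕ} (hg : Continuous fun x => (g x : ℂ)) (x y : X) :
    g x = g y :=
  PreconnectedSpace.constant inferInstance <| Nat.isClosedEmbedding_coe_real.continuous_iff.mpr <|
    by simpa [Function.comp_def] using Complex.continuous_re.comp hg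

section FlatEval

variable {X ι κ R : Type*} [TopologicalSpace X] [Fintype ι] [Fintype κ] [DecidableEq ι]
  [DecidableEq κ] [TopologicalSpace R] [Semiring R] [IsTopologicalSemiring R]

def flatEval (t : X) : Matrix ι ι C(X, Matrix κ κ R) →+* Matrix (ι × κ) (ι × κ) R :=
  (Matrix.compRingEquiv ι κ R : Matrix ι ι (Matrix κ κ R) →+* _).comp
    ((Pi.evalRingHom _ t).comp ContinuousMap.coeFnRingHom).mapMatrix

theorem flatEval_eq_comp (t : X) (p : Matrix ι ι C(X, Matrix κ κ R)) :
    flatEval t p = Matrix.comp ι ι κ κ R (p.map fun f => f t) :=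
  rfl

theorem trace_flatEval (t : X) (p : Matrix ι ι C(X, Matrix κ κ R)) :
    (flatEval t p).trace = ∑ i, (p i i t).trace := by
  rw [flatEval_eq_comp, Matrix.trace_comp]
  rfl

theorem continuous_trace_flatEval (p : Matrix ι ι C(X, Matrix κ κ R)) :
    Continuous fun t : X => (flatEval t p).trace := by
  simp only [trace_flatEval]
  exact continuous_finsetSum _ fun i _ => (p i i).continuous.matrix_trace

end FlatEval

theorem trace_cdiag {k m N : ℕ} (h : k * m = N) (blocks : Fin m → Mat k) :
    (cdiag h blocks).trace = ∑ b, (blocks b).trace := by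
  rw [cdiag, Matrix.trace_reindex, Matrix.trace_blockDiagonal]

theorem natCast_mul_trace_eval_one_of_mem_razakA {n a N : ℕ} {h : n * (a + 1) = N}
    {f : C(I01, Mat N)} (hf : f ∈ razakA n a h) :
    (a : ℂ) * (f 1).trace = (a + 1) * (f 0).trace := by
  obtain ⟨c, hf0, hf1⟩ := hf
  have htr0 : (f 0).trace = a * c.trace := by
    simp [hf0, trace_cdiag, Fin.sum_univ_castSucc, apply_ite Matrix.trace]
  have htr1 : (f 1).trace = (a + 1) * c.trace := by
    simp [hf1, trace_cdiag]
  rw [htr0, htr1]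
  ring

theorem razak_building_block_stably_projectionless_general (n a k : ℕ)
    (p : Matrix (Fin k) (Fin k) C(I01, Mat (n * (a + 1))))
    (hp : ∀ i j, p i j ∈ razakA n a rfl)
    (hidem : p * p = p) : p = 0 := by
  set P := fun t : I01 => flatEval t p
  have hP_trace : ∀ t, (P t).trace = (P t).rank := fun t =>
    (IsIdempotentElem.map hidem (flatEval t)).matrix_trace_eq_rank
  have hP_rank : ∀ t, (P t).rank = (P 0).rank := fun t =>
    PreconnectedSpace.constant_of_continuous_natCast (g := fun t => (P t).rank)
      (by simpa only [← hP_trace] using continuous_trace_flatEval p) t 0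
  have hboundary : (a : ℂ) * (P 1).trace = (a + 1) * (P 0).trace := by
    simp only [P, trace_flatEval, Finset.mul_sum]
    exact Finset.sum_congr rfl fun i _ => natCast_mul_trace_eval_one_of_mem_razakA (hp i i)
  have hrank_zero : (P 0).rank = 0 := by
    rw [hP_trace, hP_trace, hP_rank 1] at hboundary
    exact_mod_cast (by linear_combination -hboundary : ((P 0).rank : ℂ) = 0)
  ext i j t x y
  have hPt : P t = 0 := Matrix.eq_zero_of_rank_eq_zero ((hP_rank t).trans hrank_zero)
  exact congr_fun₂ hPt (i, x) (j, y)

/-- The Razak building block `A(n,n')` is stably projectionless: for every `k > 0`,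
every self-adjoint idempotent in `M_k(A(n,n'))` is zero. -/
theorem razak_building_block_stably_projectionless (n a k : ℕ) (hn : 0 < n) (ha : 0 < a)
    (hk : 0 < k) (p : Matrix (Fin k) (Fin k) C(I01, Mat (n * (a + 1))))
    (hp : ∀ i j, p i j ∈ razakA n a rfl)
    (hsa : star p = p) (hidem : p * p = p) : p = 0 :=
  razak_building_block_stably_projectionless_general n a k p hp hidem
end
end

section
/- Let n₁ and a be positive integers, set b = 2a+1, n₂ = b·n₁ and m = 2b, and define ξ_k : [0,1] → [0,1] by ξ_k(x) = x/2 for 1 ≤ k ≤ b, ξ_{b+1}(x) = 1/2 for all x, and ξ_k(x) = (x+1)/2 for b+2 ≤ k ≤ 2b. Let u be any continuous map from [0,1] into the unitary group of M_{(b+1)·n₂}(ℂ) such that the standard-form map φ(f)(x) = u(x)·diag(f(ξ₁(x)),…,f(ξ_m(x)))·u(x)* sends A(n₁,(a+1)·n₁) into A(n₂,(b+1)·n₂). Then the images of the roots of h form an approximate unit of A(n₂,(b+1)·n₂): for every g ∈ A(n₂,(b+1)·n₂), ‖φ(h^{1/r})·g − g‖ → 0 as r → ∞. -/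
open scoped Matrix.Norms.L2Operator ComplexOrder
open Filter MeasureTheory

noncomputable section

/-! Write `φ(h^{1/r})(x) = u(x) D_r(x) u(x)*`, where `D_r(x)` is diagonal with entries `1` and
`ξ_k(x)^{1/r}`. Since `ξ_k(x) ≥ x/2`, `D_r → 1` uniformly away from `x = 0`. The entries with
`k ≥ b` satisfy `ξ_k ≥ 1/2`, so `D_r → 1` uniformly on the range of the diagonal projection `P`
onto them. Finally `u(0)* g(0)` lies in the range of `P` for every `g ∈ A(n₂, (b+1)n₂)`: both
`g(0)` and `φ(h)(0)` are killed by the corner projection `Q = diag(0, …, 0, 1_{n₂})`, which gives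
`Q u(0) P = 0`, and comparing traces then gives `u(0) P u(0)* = 1 - Q`. Continuity of `u` and `g`
at `0` completes the uniform estimate. -/

open Matrix Topology

lemma sum_fin_succ_ite_lt {M : Type*} [AddCommMonoid M] (a : ℕ) (x y : M) :
    ∑ i : Fin (a + 1), (if (i : ℕ) < a then x else y) = a • x + y := by
  simp [Fin.sum_univ_castSucc]

lemma IsStarProjection.mul_mul_star_of_mem_unitary {R : Type*} [Ring R] [StarRing R] {p u : R}
    (hp : IsStarProjection p) (hu : u ∈ unitary R) : IsStarProjection (u * p * star u) := by
  refine isStarProjection_iff'.mpr ⟨?_, ?_⟩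
  · calc u * p * star u * (u * p * star u) = u * p * (star u * u) * p * star u := by
          simp only [mul_assoc]
      _ = u * p * star u := by
          rw [Unitary.star_mul_self_of_mem hu, mul_one, mul_assoc u p p, hp.isIdempotentElem.eq]
  · simp [mul_assoc, hp.isSelfAdjoint.star_eq]

lemma mul_mul_star_mul_sub_eq {R : Type*} [Ring R] [StarRing R] {u : R} (hu : u ∈ unitary R)
    (D g : R) : u * D * star u * g - g = u * ((D - 1) * (star u * g)) := by
  rw [sub_mul, one_mul, mul_sub, ← mul_assoc u (star u), Unitary.mul_star_self_of_mem hu, one_mul]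
  simp only [mul_assoc]

section StarProjectionMatrix

variable {ι 𝕜 : Type*} [Fintype ι] [DecidableEq ι] [RCLike 𝕜]

lemma Matrix.add_eq_one_of_isStarProjection_of_trace {E Q : Matrix ι ι 𝕜}
    (hE : IsStarProjection E) (hQ : IsStarProjection Q) (hEQ : E * Q = 0)
    (htr : E.trace + Q.trace = Fintype.card ι) : E + Q = 1 := by
  have hF := (hE.add hQ hEQ).one_sub
  have hpos : (1 - (E + Q)).PosSemidef := by
    have hF' : (1 - (E + Q))ᴴ * (1 - (E + Q)) = 1 - (E + Q) := by
      rw [← star_eq_conjTranspose, hF.isSelfAdjoint.star_eq, hF.isIdempotentElem.eq]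
    exact hF' ▸ posSemidef_conjTranspose_mul_self _
  have htr0 : (1 - (E + Q)).trace = 0 := by
    rw [trace_sub, trace_add, htr, trace_one, sub_self]
  exact (sub_eq_zero.mp (hpos.trace_eq_zero_iff.mp htr0)).symm

/-- The traces force `u P u* = 1 - Q`. -/
lemma Matrix.proj_mul_star_mul_eq_of_trace {u P Q g : Matrix ι ι 𝕜}
    (hu : u ∈ unitary (Matrix ι ι 𝕜)) (hP : IsStarProjection P) (hQ : IsStarProjection Q)
    (hQuP : Q * u * P = 0) (htr : P.trace + Q.trace = Fintype.card ι) (hQg : Q * g = 0) :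
    P * (star u * g) = star u * g := by
  have hE := hP.mul_mul_star_of_mem_unitary hu
  have hQE : Q * (u * P * star u) = 0 := by rw [← mul_assoc, ← mul_assoc, hQuP, zero_mul]
  have hEQ : u * P * star u * Q = 0 := by
    simpa [hE.isSelfAdjoint.star_eq, hQ.isSelfAdjoint.star_eq] using congr(star $hQE)
  have htrE : (u * P * star u).trace = P.trace := by
    rw [trace_mul_comm, ← mul_assoc, Unitary.star_mul_self_of_mem hu, one_mul]
  have hEQ1 := add_eq_one_of_isStarProjection_of_trace hE hQ hEQ (htrE ▸ htr)
  calc P * (star u * g) = star u * ((u * P * star u) * g) := by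
        simp only [← mul_assoc, Unitary.star_mul_self_of_mem hu, one_mul]
    _ = star u * g := by rw [eq_sub_of_add_eq hEQ1, sub_mul, one_mul, hQg, sub_zero]

end StarProjectionMatrix

lemma tendstoUniformlyOn_zero_of_norm_le {ι X E : Type*} [SeminormedAddGroup E] {l : Filter ι}
    {F : ι → X → E} {s : Set X} {b : ι → ℝ} (hb : Tendsto b l (𝓝 0))
    (hF : ∀ i, ∀ x ∈ s, ‖F i x‖ ≤ b i) : TendstoUniformlyOn F 0 l s := by
  rw [SeminormedAddGroup.tendstoUniformlyOn_zero]
  intro ε hε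
  filter_upwards [hb.eventually (gt_mem_nhds hε)] with i hi x hx using (hF i x hx).trans_lt hi

theorem tendstoUniformly_mul_of_tendstoUniformly_mul_proj {ι X R : Type*} [TopologicalSpace X]
    [CompactSpace X] [NormedRing R] {l : Filter ι} {D : ι → X → R} {G : C(X, R)} {P : R}
    {x₀ : X} (hD : ∀ i x, ‖D i x‖ ≤ 1) (hDP : TendstoUniformly (fun i x => D i x * P) 0 l)
    (hfar : ∀ U ∈ 𝓝 x₀, TendstoUniformlyOn D 0 l Uᶜ) (hPG : P * G x₀ = G x₀) :
    TendstoUniformly (fun i x => D i x * G x) 0 l := by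
  rw [← tendstoUniformlyOn_univ, SeminormedAddGroup.tendstoUniformlyOn_zero] at hDP ⊢
  intro ε hε
  set C := ‖G‖ + 1
  have hC : 0 < C := by positivity
  have hGC : ∀ x, ‖G x‖ ≤ C := fun x =>
    (G.norm_coe_le_norm x).trans (le_add_of_nonneg_right zero_le_one)
  set U := {x | ‖G x - G x₀‖ < ε / 2}
  have hU : U ∈ 𝓝 x₀ := by
    have h := G.continuous.continuousAt.eventually (Metric.ball_mem_nhds (G x₀) (half_pos hε))
    simp only [dist_eq_norm] at h
    exact h
  have hfarU := SeminormedAddGroup.tendstoUniformlyOn_zero.mp (hfar U hU) (ε / C) (by positivity)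
  filter_upwards [hfarU, hDP (ε / (2 * C)) (by positivity)] with i hi_far hi_near x _
  by_cases hx : x ∈ U
  · have hsplit : D i x * G x = D i x * (G x - G x₀) + D i x * P * G x₀ := by
      rw [mul_assoc, hPG, ← mul_add, sub_add_cancel]
    have h₁ : ‖D i x‖ * ‖G x - G x₀‖ < ε / 2 :=
      (mul_le_of_le_one_left (norm_nonneg _) (hD i x)).trans_lt hx
    have h₂ : ‖D i x * P‖ * ‖G x₀‖ ≤ ε / (2 * C) * C :=
      mul_le_mul (hi_near x trivial).le (hGC x₀) (norm_nonneg _) (by positivity)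
    calc ‖D i x * G x‖ ≤ ‖D i x‖ * ‖G x - G x₀‖ + ‖D i x * P‖ * ‖G x₀‖ := by
          rw [hsplit]; exact norm_add_le_of_le (norm_mul_le _ _) (norm_mul_le _ _)
      _ < ε := by
          rw [div_mul_eq_div_div, div_mul_cancel₀ _ hC.ne'] at h₂
          linarith
  · calc ‖D i x * G x‖ ≤ ‖D i x‖ * C := (norm_mul_le _ _).trans
          (mul_le_mul_of_nonneg_left (hGC x) (norm_nonneg _))
      _ < ε / C * C := mul_lt_mul_of_pos_right (hi_far x hx) hC
      _ = ε := div_mul_cancel₀ _ hC.ne'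

lemma norm_ofReal_rpow_sub_one_le {c t e : ℝ} (hc : 0 ≤ c) (hct : c ≤ t) (ht : t ≤ 1)
    (he : 0 ≤ e) : ‖((t ^ e : ℝ) : ℂ) - 1‖ ≤ 1 - c ^ e := by
  have h₁ : t ^ e ≤ 1 := Real.rpow_le_one (hc.trans hct) ht he
  have h₂ : c ^ e ≤ t ^ e := Real.rpow_le_rpow hc hct he
  rw [← Complex.ofReal_one, ← Complex.ofReal_sub, Complex.norm_real, Real.norm_eq_abs,
    abs_of_nonpos (by linarith)]
  linarith

lemma tendsto_one_sub_rpow_one_div {c : ℝ} (hc : 0 < c) :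
    Tendsto (fun r : ℕ => 1 - c ^ ((1 : ℝ) / r)) atTop (𝓝 0) := by
  have h := (Real.continuousAt_const_rpow hc.ne').tendsto.comp
    (tendsto_one_div_atTop_nhds_zero_nat (𝕜 := ℝ))
  simpa [Function.comp_def] using h.const_sub 1

section BlockDiagonal

variable {k m N : ℕ} (h : k * m = N)

lemma cdiag_eq_submatrix (blocks : Fin m → Mat k) :
    cdiag h blocks = (blockDiagonal blocks).submatrix
      (finProdFinEquiv.trans (finCongr h)).symm (finProdFinEquiv.trans (finCongr h)).symm :=
  rfl

lemma cdiag_mul (A B : Fin m → Mat k) :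
    cdiag h A * cdiag h B = cdiag h (fun j => A j * B j) := by
  simp only [cdiag_eq_submatrix, submatrix_mul_equiv, blockDiagonal_mul]

lemma cdiag_zero : cdiag h (fun _ => (0 : Mat k)) = 0 := by
  simp [cdiag_eq_submatrix, ← Pi.zero_def]

lemma cdiag_star (A : Fin m → Mat k) : star (cdiag h A) = cdiag h (fun j => star (A j)) := by
  simp only [cdiag_eq_submatrix, star_eq_conjTranspose, conjTranspose_submatrix,
    blockDiagonal_conjTranspose]

lemma cdiag_trace (A : Fin m → Mat k) : (cdiag h A).trace = ∑ j, (A j).trace := by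
  rw [cdiag_eq_submatrix, ← trace_blockDiagonal]
  exact Equiv.sum_comp (finProdFinEquiv.trans (finCongr h)).symm
    (fun i => blockDiagonal A i i)

lemma cdiag_diagonal (v : Fin m → Fin k → ℂ) :
    cdiag h (fun j => diagonal (v j)) = diagonal (fun p =>
      v ((finProdFinEquiv.trans (finCongr h)).symm p).2
        ((finProdFinEquiv.trans (finCongr h)).symm p).1) := by
  rw [cdiag_eq_submatrix, blockDiagonal_diagonal, submatrix_diagonal_equiv]
  rfl

end BlockDiagonal

def razakCorner (n a : ℕ) {N : ℕ} (h : n * (a + 1) = N) : Mat N :=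
  cdiag h fun i : Fin (a + 1) => if (i : ℕ) < a then 0 else 1

section RazakCorner

variable {n a N : ℕ} (h : n * (a + 1) = N)

lemma isStarProjection_razakCorner : IsStarProjection (razakCorner n a h) := by
  refine isStarProjection_iff'.mpr ⟨?_, ?_⟩
  · rw [razakCorner, cdiag_mul]
    congr 1; funext i; split_ifs <;> simp
  · rw [razakCorner, cdiag_star]
    congr 1; funext i; split_ifs <;> simp

lemma trace_razakCorner : (razakCorner n a h).trace = n := by
  simp only [razakCorner, cdiag_trace, apply_ite trace, trace_zero, trace_one, Fintype.card_fin,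
    sum_fin_succ_ite_lt, smul_zero, zero_add]

lemma razakCorner_mul_apply_zero {f : C(I01, Mat N)} (hf : f ∈ razakA n a h) :
    razakCorner n a h * f 0 = 0 := by
  obtain ⟨c, hf0, -⟩ := hf
  rw [hf0, razakCorner, cdiag_mul, ← cdiag_zero h]
  congr 1; funext i; split_ifs <;> simp

end RazakCorner

/-- `h^{1/r}(t)`. -/
def hRoot (n a r : ℕ) (t : I01) : Mat (n * (a + 1)) :=
  cdiag rfl fun i : Fin (a + 1) =>
    if (i : ℕ) < a then 1 else ((((t : ℝ) ^ ((1 : ℝ) / (r : ℝ))) : ℝ) : ℂ) • 1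

def razakDiag (n a m : ℕ) (s : Fin m → ℂ) : Mat (n * (a + 1) * m) :=
  cdiag rfl fun k => cdiag rfl fun i : Fin (a + 1) => if (i : ℕ) < a then 1 else s k • 1

def rootVec {m : ℕ} (t : Fin m → I01) (r : ℕ) : Fin m → ℂ :=
  fun k => (((t k : ℝ) ^ ((1 : ℝ) / (r : ℝ)) : ℝ) : ℂ)

def indicatorGe (b : ℕ) {m : ℕ} : Fin m → ℂ := fun k => if (k : ℕ) < b then 0 else 1

section RazakDiag

variable {n a m : ℕ}

lemma cdiag_hRoot (r : ℕ) (t : Fin m → I01) :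
    cdiag rfl (fun k => hRoot n a r (t k)) = razakDiag n a m (rootVec t r) :=
  rfl

lemma razakDiag_eq_diagonal (s : Fin m → ℂ) :
    razakDiag n a m s = diagonal fun p =>
      if ((finProdFinEquiv.symm (finProdFinEquiv.symm p).1).2 : ℕ) < a then 1
      else s (finProdFinEquiv.symm p).2 := by
  have blocks : ∀ k, (cdiag rfl fun i : Fin (a + 1) => if (i : ℕ) < a then 1 else s k • 1) =
      cdiag rfl fun i : Fin (a + 1) => diagonal fun _ : Fin n =>
        if (i : ℕ) < a then 1 else s k := by
    intro k; congr 1; funext i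
    split_ifs
    · exact diagonal_one.symm
    · ext; simp [diagonal_apply, one_apply]
  simp only [razakDiag, blocks, cdiag_diagonal]
  rfl

lemma razakDiag_one : razakDiag n a m 1 = 1 := by
  rw [razakDiag_eq_diagonal, ← diagonal_one]
  congr 1; funext p; simp

lemma razakDiag_mul (s t : Fin m → ℂ) :
    razakDiag n a m s * razakDiag n a m t = razakDiag n a m (s * t) := by
  simp only [razakDiag_eq_diagonal, diagonal_mul_diagonal]
  congr 1; funext p; split_ifs <;> simp

lemma star_razakDiag (s : Fin m → ℂ) : star (razakDiag n a m s) = razakDiag n a m (star s) := by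
  simp only [razakDiag_eq_diagonal, star_eq_conjTranspose, diagonal_conjTranspose]
  congr 1; funext p; simp only [Pi.star_apply]; split_ifs <;> simp

lemma trace_razakDiag (s : Fin m → ℂ) :
    (razakDiag n a m s).trace = m * (n * a) + n * ∑ k, s k := by
  simp only [razakDiag, cdiag_trace, apply_ite trace, trace_one, trace_smul, Fintype.card_fin,
    sum_fin_succ_ite_lt, Finset.sum_add_distrib, Finset.sum_const, Finset.card_univ, smul_eq_mul,
    ← Finset.sum_mul]
  ring

lemma norm_razakDiag_sub_le (s t : Fin m → ℂ) {C : ℝ} (hC : 0 ≤ C)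
    (hst : ∀ k, ‖s k - t k‖ ≤ C) : ‖razakDiag n a m s - razakDiag n a m t‖ ≤ C := by
  rw [razakDiag_eq_diagonal, razakDiag_eq_diagonal, diagonal_sub, l2_opNorm_diagonal,
    pi_norm_le_iff_of_nonneg hC]
  intro p
  split_ifs
  · simpa using hC
  · exact hst _

lemma isStarProjection_razakDiag_indicatorGe (b : ℕ) :
    IsStarProjection (razakDiag n a m (indicatorGe b)) := by
  refine isStarProjection_iff'.mpr ⟨?_, ?_⟩
  · rw [razakDiag_mul]
    congr 1; funext k; simp only [Pi.mul_apply, indicatorGe]; split_ifs <;> simp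
  · rw [star_razakDiag]
    congr 1; funext k; simp only [Pi.star_apply, indicatorGe]; split_ifs <;> simp

lemma norm_razakDiag_rootVec_sub_one_le {t : Fin m → I01} {c : ℝ} (hc₀ : 0 ≤ c) (hc₁ : c ≤ 1)
    (hct : ∀ k, c ≤ t k) (r : ℕ) :
    ‖razakDiag n a m (rootVec t r) - 1‖ ≤ 1 - c ^ ((1 : ℝ) / r) := by
  rw [← razakDiag_one]
  refine norm_razakDiag_sub_le _ _ ?_ fun k =>
    norm_ofReal_rpow_sub_one_le hc₀ (hct k) (t k).2.2 (by positivity)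
  linarith [Real.rpow_le_one hc₀ hc₁ (by positivity : (0 : ℝ) ≤ 1 / r)]

lemma norm_razakDiag_rootVec_sub_one_le_one (t : Fin m → I01) (r : ℕ) :
    ‖razakDiag n a m (rootVec t r) - 1‖ ≤ 1 :=
  (norm_razakDiag_rootVec_sub_one_le le_rfl zero_le_one (fun k => (t k).2.1) r).trans
    (sub_le_self _ (Real.rpow_nonneg le_rfl _))

lemma norm_razakDiag_rootVec_sub_one_mul_le {b : ℕ} {t : Fin m → I01} {c : ℝ} (hc₀ : 0 ≤ c)
    (hc₁ : c ≤ 1) (hct : ∀ k : Fin m, b ≤ k → c ≤ t k) (r : ℕ) :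
    ‖(razakDiag n a m (rootVec t r) - 1) * razakDiag n a m (indicatorGe b)‖ ≤
      1 - c ^ ((1 : ℝ) / r) := by
  have hc : 0 ≤ 1 - c ^ ((1 : ℝ) / r) := by
    linarith [Real.rpow_le_one hc₀ hc₁ (by positivity : (0 : ℝ) ≤ 1 / r)]
  rw [sub_mul, one_mul, razakDiag_mul]
  refine norm_razakDiag_sub_le _ _ hc fun k => ?_
  simp only [Pi.mul_apply, indicatorGe]
  split_ifs with hk
  · simpa using hc
  · rw [mul_one]
    exact norm_ofReal_rpow_sub_one_le hc₀ (hct k (not_lt.mp hk)) (t k).2.2 (by positivity)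

end RazakDiag

lemma sum_indicatorGe (b : ℕ) : ∑ k : Fin (2 * b), indicatorGe b k = b := by
  unfold indicatorGe
  rw [Fin.sum_univ_eq_sum_range (fun k => if k < b then (0 : ℂ) else 1), two_mul,
    Finset.sum_range_add, Finset.sum_eq_zero fun k hk => if_pos (Finset.mem_range.mp hk)]
  simp

lemma trace_razakDiag_indicatorGe_add_trace_razakCorner (n a : ℕ)
    (hN : n * (2 * a + 1) * (2 * a + 1 + 1) = n * (a + 1) * (2 * (2 * a + 1))) :
    (razakDiag n a (2 * (2 * a + 1)) (indicatorGe (2 * a + 1))).trace +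
      (razakCorner (n * (2 * a + 1)) (2 * a + 1) hN).trace =
      Fintype.card (Fin (n * (a + 1) * (2 * (2 * a + 1)))) := by
  rw [trace_razakDiag, trace_razakCorner, Fintype.card_fin, sum_indicatorGe]
  push_cast
  ring

def razakXi (b k : ℕ) (x : ℝ) : ℝ :=
  if k < b then x / 2 else if k = b then 1 / 2 else (x + 1) / 2

lemma half_le_razakXi {b k : ℕ} (hk : b ≤ k) {x : ℝ} (hx : 0 ≤ x) : 1 / 2 ≤ razakXi b k x := by
  rw [razakXi, if_neg (not_lt.mpr hk)]; split_ifs <;> linarith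

lemma razakXi_zero {b k : ℕ} (hk : b ≤ k) : razakXi b k 0 = 1 / 2 := by
  rw [razakXi, if_neg (not_lt.mpr hk)]; split_ifs <;> norm_num

lemma half_mul_le_razakXi (b k : ℕ) {x : ℝ} (hx : x ≤ 1) : x / 2 ≤ razakXi b k x := by
  unfold razakXi; split_ifs <;> linarith

section ConnectingMap

variable {n₁ a : ℕ} {ξ : Fin (2 * (2 * a + 1)) → I01 → I01}

lemma tendstoUniformly_razakDiag_rootVec_sub_one_mul
    (hξ : ∀ k x, (ξ k x : ℝ) = razakXi (2 * a + 1) k x) :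
    TendstoUniformly (fun r x => (razakDiag n₁ a _ (rootVec (ξ · x) r) - 1) *
      razakDiag n₁ a _ (indicatorGe (2 * a + 1))) 0 atTop :=
  tendstoUniformlyOn_univ.mp <| tendstoUniformlyOn_zero_of_norm_le
    (tendsto_one_sub_rpow_one_div one_half_pos) fun r x _ =>
      norm_razakDiag_rootVec_sub_one_mul_le one_half_pos.le one_half_lt_one.le
        (fun k hk => (hξ k x).symm ▸ half_le_razakXi hk x.2.1) r

lemma tendstoUniformlyOn_razakDiag_rootVec_sub_one_compl
    (hξ : ∀ k x, (ξ k x : ℝ) = razakXi (2 * a + 1) k x) {U : Set I01} (hU : U ∈ 𝓝 0) :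
    TendstoUniformlyOn (fun r x => razakDiag n₁ a _ (rootVec (ξ · x) r) - 1) 0 atTop Uᶜ := by
  obtain ⟨δ, hδ, hball⟩ := Metric.mem_nhds_iff.mp hU
  have hδx : ∀ x ∈ Uᶜ, δ ≤ (x : ℝ) := fun x hx => by
    by_contra! hxδ
    refine hx (hball ?_)
    rwa [Metric.mem_ball, Subtype.dist_eq, Real.dist_eq, Set.Icc.coe_zero, sub_zero,
      abs_of_nonneg x.2.1]
  set c := min δ 1 / 2 with hc_def
  have hc : 0 < c := by positivity
  refine tendstoUniformlyOn_zero_of_norm_le (tendsto_one_sub_rpow_one_div hc) fun r x hx =>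
    norm_razakDiag_rootVec_sub_one_le hc.le ?_ (fun k => ?_) r
  · linarith [min_le_right δ 1, hc_def]
  · rw [hξ k x]
    linarith [hc_def, min_le_left δ 1, hδx x hx, half_mul_le_razakXi (2 * a + 1) k x.2.2]

lemma mem_razakA_of_apply_eq_hRoot_one {f : C(I01, Mat (n₁ * (a + 1)))}
    (hf : ∀ t, f t = hRoot n₁ a 1 t) : f ∈ razakA n₁ a rfl := by
  refine ⟨1, ?_, ?_⟩ <;> rw [hf, hRoot] <;> congr 1 <;> funext i <;> split_ifs <;> simp

/-- At `0` the blocks `k ≥ b` of `φ(h)` are `h(1/2) = diag(1, …, 1, 1/2)`, invertible on the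
range of `P`; so `Q φ(h)(0) = 0` forces `Q u(0) P = 0`. -/
lemma razakCorner_mul_mul_razakDiag_indicatorGe
    (hξ : ∀ k x, (ξ k x : ℝ) = razakXi (2 * a + 1) k x)
    {u : C(I01, Mat (n₁ * (a + 1) * (2 * (2 * a + 1))))} (hu₀ : u 0 ∈ unitary _)
    {φ₁ : C(I01, Mat (n₁ * (a + 1) * (2 * (2 * a + 1))))}
    (hφ₁ : φ₁ 0 = u 0 * razakDiag n₁ a _ (rootVec (ξ · 0) 1) * star (u 0))
    (hN : n₁ * (2 * a + 1) * (2 * a + 1 + 1) = n₁ * (a + 1) * (2 * (2 * a + 1)))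
    (hmem : φ₁ ∈ razakA (n₁ * (2 * a + 1)) (2 * a + 1) hN) :
    razakCorner (n₁ * (2 * a + 1)) (2 * a + 1) hN * u 0 *
      razakDiag n₁ a _ (indicatorGe (2 * a + 1)) = 0 := by
  set Q := razakCorner (n₁ * (2 * a + 1)) (2 * a + 1) hN
  set D₁ := razakDiag n₁ a _ (rootVec (ξ · 0) 1)
  set D₂ := razakDiag n₁ a (2 * (2 * a + 1)) ((2 : ℂ) • indicatorGe (2 * a + 1))
  have hD : D₁ * D₂ = razakDiag n₁ a _ (indicatorGe (2 * a + 1)) := by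
    rw [razakDiag_mul]
    congr 1; funext k
    simp only [rootVec, indicatorGe, Pi.mul_apply, Pi.smul_apply]
    split_ifs with hk
    · simp
    · rw [hξ, Set.Icc.coe_zero, razakXi_zero (not_lt.mp hk)]
      norm_num
  calc Q * u 0 * razakDiag n₁ a _ (indicatorGe (2 * a + 1))
      = Q * (u 0 * D₁ * star (u 0)) * (u 0 * D₂) := by
        simp only [← hD, mul_assoc, ← mul_assoc (star (u 0)), Unitary.star_mul_self_of_mem hu₀,
          one_mul]
    _ = 0 := by rw [← hφ₁, razakCorner_mul_apply_zero _ hmem, zero_mul]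

end ConnectingMap

/-- for the concrete connecting map `φ : A(n₁,(a+1)n₁) → A(n₂,(b+1)n₂)`
(`b = 2a+1`, `n₂ = b·n₁`, `m = 2b`, with the concrete maps `ξ_k`), the images `φ(h^{1/r})` of
the roots of the canonical self-adjoint element form an approximate unit of `A(n₂,(b+1)n₂)`. -/
theorem razak_image_approximate_unit (n₁ a : ℕ)
    (ξ : Fin (2 * (2 * a + 1)) → I01 → I01)
    (hξ : ∀ (k : Fin (2 * (2 * a + 1))) (x : I01),
      ((ξ k x : ℝ)) = if (k : ℕ) < 2 * a + 1 then (x : ℝ) / 2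
        else if (k : ℕ) = 2 * a + 1 then 1 / 2 else ((x : ℝ) + 1) / 2)
    (u : C(I01, Mat (n₁ * (a + 1) * (2 * (2 * a + 1)))))
    (hu : ∀ x : I01, u x ∈ Matrix.unitaryGroup (Fin (n₁ * (a + 1) * (2 * (2 * a + 1)))) ℂ)
    (Φ : C(I01, Mat (n₁ * (a + 1))) → C(I01, Mat (n₁ * (a + 1) * (2 * (2 * a + 1)))))
    (hΦ : ∀ (f : C(I01, Mat (n₁ * (a + 1)))) (x : I01),
      Φ f x = u x * cdiag rfl (fun k => f (ξ k x)) * star (u x))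
    (hinto : ∀ f ∈ razakA n₁ a rfl,
      Φ f ∈ razakA (n₁ * (2 * a + 1)) (2 * a + 1)
        (show n₁ * (2 * a + 1) * (2 * a + 1 + 1) = n₁ * (a + 1) * (2 * (2 * a + 1)) by ring))
    (H : ℕ → C(I01, Mat (n₁ * (a + 1))))
    (hH : ∀ (r : ℕ) (t : I01), H r t = cdiag rfl (fun i : Fin (a + 1) =>
      if (i : ℕ) < a then (1 : Mat n₁)
      else ((((t : ℝ) ^ ((1 : ℝ) / (r : ℝ))) : ℝ) : ℂ) • (1 : Mat n₁))) :
    ∀ g ∈ razakA (n₁ * (2 * a + 1)) (2 * a + 1)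
        (show n₁ * (2 * a + 1) * (2 * a + 1 + 1) = n₁ * (a + 1) * (2 * (2 * a + 1)) by ring),
      Tendsto (fun r : ℕ => ‖Φ (H r) * g - g‖) atTop (nhds 0) := by
  intro g hg
  have hξ' : ∀ k x, (ξ k x : ℝ) = razakXi (2 * a + 1) k x := hξ
  have hΦH : ∀ r x, Φ (H r) x = u x * razakDiag n₁ a _ (rootVec (ξ · x) r) * star (u x) :=
    fun r x => by rw [hΦ, ← cdiag_hRoot]; simp only [hH, hRoot]
  have hPG := Matrix.proj_mul_star_mul_eq_of_trace (hu 0)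
    (isStarProjection_razakDiag_indicatorGe _) (isStarProjection_razakCorner _)
    (razakCorner_mul_mul_razakDiag_indicatorGe hξ' (hu 0) (hΦH 1 0) _
      (hinto _ (mem_razakA_of_apply_eq_hRoot_one (hH 1))))
    (trace_razakDiag_indicatorGe_add_trace_razakCorner n₁ a _) (razakCorner_mul_apply_zero _ hg)
  have key := tendstoUniformly_mul_of_tendstoUniformly_mul_proj (G := star u * g) (x₀ := 0)
    (fun r x => norm_razakDiag_rootVec_sub_one_le_one (ξ · x) r)
    (tendstoUniformly_razakDiag_rootVec_sub_one_mul hξ')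
    (fun _ hU => tendstoUniformlyOn_razakDiag_rootVec_sub_one_compl hξ' hU) hPG
  rw [← tendstoUniformlyOn_univ, SeminormedAddGroup.tendstoUniformlyOn_zero] at key
  rw [← tendsto_zero_iff_norm_tendsto_zero, ContinuousMap.tendsto_iff_tendstoUniformly]
  -- `rw` fails here: the uniformity of `Mat N` is the product one, which agrees with the
  -- L2-operator-norm one only up to unfolding
  refine tendstoUniformlyOn_univ.mp (SeminormedAddGroup.tendstoUniformlyOn_zero.mpr fun ε hε => ?_)
  filter_upwards [key ε hε] with r hr x _
  rw [ContinuousMap.sub_apply, ContinuousMap.mul_apply, hΦH, mul_mul_star_mul_sub_eq (hu x),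
    CStarRing.norm_mem_unitary_mul _ (hu x)]
  exact hr x trivial
end
end
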